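/- arXiv:1603.04154 — 4 statements merged into one kernel-verified Lean document; each statement's English description precedes it below -/
import Mathlib

section
/- For every vector x ∈ ℝ^n one has ∑_{i=1}^n ⟨A_i/‖A_i‖, x⟩² ≥ ‖x‖² / (τ ‖A⁻¹‖)², where τ = max_i ‖A_i‖. -/
/-!
The `i`-th coordinate of `A x` is `⟪A_i, x⟫`, so each summand is at least `(A x)_i ^ 2 / τ ^ 2`
and the sum is at least `‖A x‖ ^ 2 / τ ^ 2`; finally `‖x‖ ≤ ‖A⁻¹‖ ‖A x‖`.
-/

open scoped RealInnerProductSpace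

namespace Matrix

variable {ι : Type*} [Fintype ι] [DecidableEq ι]

lemma toEuclideanCLM_apply_eq_inner_row (A : Matrix ι ι ℝ) (x : EuclideanSpace ℝ ι) (i : ι) :
    toEuclideanCLM (𝕜 := ℝ) A x i = ⟪WithLp.toLp 2 (A i), x⟫ := by
  simp [mulVec, dotProduct, PiLp.inner_apply, mul_comm]

lemma norm_le_norm_toEuclideanCLM_inv_mul {A : Matrix ι ι ℝ} (hA : IsUnit A.det)
    (x : EuclideanSpace ℝ ι) :
    ‖x‖ ≤ ‖toEuclideanCLM (𝕜 := ℝ) A⁻¹‖ * ‖toEuclideanCLM (𝕜 := ℝ) A x‖ := by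
  have hinv : toEuclideanCLM (𝕜 := ℝ) A⁻¹ * toEuclideanCLM (𝕜 := ℝ) A = 1 := by
    rw [← map_mul, nonsing_inv_mul A hA, map_one]
  calc ‖x‖ = ‖(toEuclideanCLM (𝕜 := ℝ) A⁻¹ * toEuclideanCLM (𝕜 := ℝ) A) x‖ := by rw [hinv]; rfl
    _ ≤ _ := (toEuclideanCLM (𝕜 := ℝ) A⁻¹).le_opNorm _

end Matrix

lemma inner_sq_div_sq_le_inner_normalize_sq {E : Type*} [NormedAddCommGroup E]
    [InnerProductSpace ℝ E] {r : E} {τ : ℝ} (hr : ‖r‖ ≤ τ) (x : E) :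
    ⟪r, x⟫ ^ 2 / τ ^ 2 ≤ ⟪‖r‖⁻¹ • r, x⟫ ^ 2 := by
  rcases eq_or_ne r 0 with rfl | hr0
  · simp
  rw [real_inner_smul_left, mul_pow, inv_pow, ← div_eq_inv_mul]
  gcongr

lemma sq_div_sq_le_sq_of_le_mul {a b s : ℝ} (ha : 0 ≤ a) (hb : 0 ≤ b) (hs : 0 ≤ s)
    (h : a ≤ s * b) : (a / s) ^ 2 ≤ b ^ 2 := by
  have : a / s ≤ b := div_le_of_le_mul₀ hs hb (by rwa [mul_comm])
  gcongr

theorem stmt0_general (n : ℕ)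
    (A : Matrix (Fin n) (Fin n) ℝ)
    (r : Fin n → EuclideanSpace ℝ (Fin n))
    (hrow : ∀ i j, A i j = r i j)
    (hinv : IsUnit A.det)
    (τ : ℝ) (hτ : IsGreatest (Set.range fun i => ‖r i‖) τ)
    (x : EuclideanSpace ℝ (Fin n)) :
    ∑ i, ⟪(‖r i‖)⁻¹ • r i, x⟫ ^ 2 ≥
      ‖x‖ ^ 2 / (τ * ‖Matrix.toEuclideanCLM (𝕜 := ℝ) A⁻¹‖) ^ 2 := by
  set S := Matrix.toEuclideanCLM (𝕜 := ℝ) A⁻¹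
  set y := Matrix.toEuclideanCLM (𝕜 := ℝ) A x
  have hy : ∀ i, y i = ⟪r i, x⟫ := fun i => by
    rw [Matrix.toEuclideanCLM_apply_eq_inner_row]
    congr 1
    ext j
    exact hrow i j
  have hxy : (‖x‖ / ‖S‖) ^ 2 ≤ ‖y‖ ^ 2 :=
    sq_div_sq_le_sq_of_le_mul (norm_nonneg _) (norm_nonneg _) (norm_nonneg _)
      (Matrix.norm_le_norm_toEuclideanCLM_inv_mul hinv x)
  calc ‖x‖ ^ 2 / (τ * ‖S‖) ^ 2 = (‖x‖ / ‖S‖) ^ 2 / τ ^ 2 := by ring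
    _ ≤ ‖y‖ ^ 2 / τ ^ 2 := by gcongr
    _ = ∑ i, ⟪r i, x⟫ ^ 2 / τ ^ 2 := by
      simp only [EuclideanSpace.real_norm_sq_eq, Finset.sum_div, hy]
    _ ≤ ∑ i, ⟪(‖r i‖)⁻¹ • r i, x⟫ ^ 2 :=
      Finset.sum_le_sum fun i _ => inner_sq_div_sq_le_inner_normalize_sq (hτ.2 ⟨i, rfl⟩) x

/-- For every vector `x ∈ ℝ^n`,
`∑_{i=1}^n ⟨A_i/‖A_i‖, x⟩² ≥ ‖x‖² / (τ ‖A⁻¹‖)²`, where `τ = max_i ‖A_i‖`,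
`A` is an invertible real `n × n` matrix with nonzero rows `A_i`, and `‖A⁻¹‖`
is the ℓ²-operator norm of `A⁻¹`. -/
theorem stmt0 (n : ℕ) (hn : 1 ≤ n)
    (A : Matrix (Fin n) (Fin n) ℝ)
    (r : Fin n → EuclideanSpace ℝ (Fin n))
    (hrow : ∀ i j, A i j = r i j)
    (hinv : IsUnit A.det)
    (hne : ∀ i, r i ≠ 0)
    (τ : ℝ) (hτ : IsGreatest (Set.range fun i => ‖r i‖) τ)
    (x : EuclideanSpace ℝ (Fin n)) :
    ∑ i, ⟪(‖r i‖)⁻¹ • r i, x⟫ ^ 2 ≥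
      ‖x‖ ^ 2 / (τ * ‖Matrix.toEuclideanCLM (𝕜 := ℝ) A⁻¹‖) ^ 2 :=
  stmt0_general n A r hrow hinv τ hτ x
end

section
/- If each agent's initial state satisfies ⟨A_i, x_i(0)⟩ = b_i and the states are updated by x_i(t+1) = x_i(t) − (1/d_i) P_i (d_i x_i(t) − ∑_{j : α_{ij}=1} x_j(t)), then the errors y_i(t) = x_i(t) − x* satisfy the error updating equation y_i(t+1) = (1/d_i) P_i ∑_{j : α_{ij}=1} P_j y_j(t) for every agent i and every t ≥ 0. -/
open scoped RealInnerProductSpace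

/-!
Each update moves `x_i` by a vector in the range of `P_i`, which is `ker A_i`, so the constraint
`⟨A_i, x_i(t)⟩ = b_i = ⟨A_i, x*⟩` persists and every error `y_i(t)` is fixed by `P_i`.
Since `d_i` is the number of neighbours of `i`, the term `d_i x_i − ∑_j x_j` equals
`d_i y_i − ∑_j y_j`; applying `P_i` and using `P_i y_i = y_i` leaves `(1/d_i) P_i ∑_j y_j = (1/d_i) P_i ∑_j P_j y_j`.
-/

/-- The orthogonal projection `P_i = I − A_i A_iᵀ/‖A_i‖²` of `ℝ^n` onto
`ker A_i`, as a map. -/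
noncomputable def proj {n : ℕ} (r : Fin n → EuclideanSpace ℝ (Fin n)) (i : Fin n)
    (x : EuclideanSpace ℝ (Fin n)) : EuclideanSpace ℝ (Fin n) :=
  x - (⟪r i, x⟫ / ‖r i‖ ^ 2) • r i

open Finset

section Proj

variable {n : ℕ} (r : Fin n → EuclideanSpace ℝ (Fin n)) (i : Fin n)

lemma inner_proj_eq_zero (h : r i ≠ 0) (v : EuclideanSpace ℝ (Fin n)) :
    ⟪r i, proj r i v⟫ = 0 := by
  have h2 : ‖r i‖ ^ 2 ≠ 0 := pow_ne_zero _ (norm_ne_zero_iff.mpr h)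
  rw [proj, inner_sub_right, real_inner_smul_right, real_inner_self_eq_norm_sq,
    div_mul_cancel₀ _ h2, sub_self]

lemma proj_eq_self_of_inner_eq_zero {v : EuclideanSpace ℝ (Fin n)} (h : ⟪r i, v⟫ = 0) :
    proj r i v = v := by
  simp [proj, h]

lemma proj_sub (u v : EuclideanSpace ℝ (Fin n)) :
    proj r i (u - v) = proj r i u - proj r i v := by
  simp only [proj, inner_sub_right, sub_div, sub_smul]
  abel

lemma proj_smul (c : ℝ) (v : EuclideanSpace ℝ (Fin n)) :
    proj r i (c • v) = c • proj r i v := by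
  simp only [proj, real_inner_smul_right, mul_div_assoc, smul_sub, smul_smul]

end Proj

lemma sum_eq_card_filter_eq_one {ι R : Type*} [Fintype ι] [Semiring R] [DecidableEq R]
    (a : ι → R) (h : ∀ j, a j = 0 ∨ a j = 1) :
    ∑ j, a j = #(univ.filter fun j => a j = 1) := by
  have ha : ∀ j, a j = if a j = 1 then 1 else 0 := fun j => by
    rcases h j with h | h <;> simp [h]
  rw [sum_congr rfl fun j _ => ha j, sum_boole]

lemma card_smul_sub_sum_eq {ι R M : Type*} [Ring R] [AddCommGroup M] [Module R M]
    (s : Finset ι) (u c : M) (f : ι → M) :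
    (#s : R) • u - ∑ j ∈ s, f j = (#s : R) • (u - c) - ∑ j ∈ s, (f j - c) := by
  simp only [sum_sub_distrib, smul_sub, sum_const, Nat.cast_smul_eq_nsmul]
  abel

lemma inner_eq_inner_zero_of_update_proj {n : ℕ} {r : Fin n → EuclideanSpace ℝ (Fin n)}
    (hne : ∀ i, r i ≠ 0) {x v : ℕ → Fin n → EuclideanSpace ℝ (Fin n)} {c : ℕ → Fin n → ℝ}
    (hupdate : ∀ t i, x (t + 1) i = x t i - c t i • proj r i (v t i)) (t : ℕ) (i : Fin n) :
    ⟪r i, x t i⟫ = ⟪r i, x 0 i⟫ := by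
  induction t with
  | zero => rfl
  | succ t ih =>
    rw [hupdate, inner_sub_right, real_inner_smul_right, inner_proj_eq_zero r i (hne i),
      mul_zero, sub_zero, ih]

lemma sub_inv_smul_proj_card_smul_sub_sum {n : ℕ} (r : Fin n → EuclideanSpace ℝ (Fin n))
    {i : Fin n} {s : Finset (Fin n)} (hs : s.Nonempty) (x : Fin n → EuclideanSpace ℝ (Fin n))
    (xs : EuclideanSpace ℝ (Fin n)) (hfix : proj r i (x i - xs) = x i - xs) :
    x i - (#s : ℝ)⁻¹ • proj r i ((#s : ℝ) • x i - ∑ j ∈ s, x j) - xs =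
      (#s : ℝ)⁻¹ • proj r i (∑ j ∈ s, (x j - xs)) := by
  have hcard : (#s : ℝ) ≠ 0 := Nat.cast_ne_zero.mpr hs.card_pos.ne'
  rw [card_smul_sub_sum_eq s _ xs, proj_sub, proj_smul, hfix, smul_sub, smul_smul,
    inv_mul_cancel₀ hcard, one_smul]
  abel

theorem stmt10_general (n : ℕ)
    (r : Fin n → EuclideanSpace ℝ (Fin n))
    (hne : ∀ i, r i ≠ 0)
    (xs : EuclideanSpace ℝ (Fin n)) (b : Fin n → ℝ)
    (hb : ∀ j, b j = ⟪r j, xs⟫)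
    (α : Matrix (Fin n) (Fin n) ℝ)
    (hα01 : ∀ i j, α i j = 0 ∨ α i j = 1)
    (hself : ∀ i, α i i = 1)
    (d : Fin n → ℝ) (hd : ∀ i, d i = ∑ j, α i j)
    (x : ℕ → Fin n → EuclideanSpace ℝ (Fin n))
    (hinit : ∀ i, ⟪r i, x 0 i⟫ = b i)
    (hupdate : ∀ t i, x (t + 1) i =
      x t i - (d i)⁻¹ •
        proj r i (d i • x t i -
          ∑ j ∈ Finset.univ.filter (fun j => α i j = 1), x t j)) :
    ∀ t i, x (t + 1) i - xs =
      (d i)⁻¹ •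
        proj r i (∑ j ∈ Finset.univ.filter (fun j => α i j = 1),
          proj r j (x t j - xs)) := by
  intro t i
  have hdeg : d i = #(univ.filter fun j => α i j = 1) :=
    (hd i).trans (sum_eq_card_filter_eq_one _ (hα01 i))
  have hfix : ∀ j, proj r j (x t j - xs) = x t j - xs := fun j =>
    proj_eq_self_of_inner_eq_zero r j <| by
      rw [inner_sub_right, inner_eq_inner_zero_of_update_proj hne hupdate, hinit, hb, sub_self]
  rw [sum_congr rfl fun j _ => hfix j, hupdate, hdeg]
  exact sub_inv_smul_proj_card_smul_sub_sum r ⟨i, by simp [hself]⟩ (x t) xs (hfix i)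

/-- If each agent's initial state satisfies `⟨A_i, x_i(0)⟩ = b_i` and
the states are updated by
`x_i(t+1) = x_i(t) − (1/d_i) P_i (d_i x_i(t) − ∑_{j : α_{ij}=1} x_j(t))`,
then the errors `y_i(t) = x_i(t) − x*` satisfy
`y_i(t+1) = (1/d_i) P_i ∑_{j : α_{ij}=1} P_j y_j(t)` for every agent `i` and `t ≥ 0`. -/
theorem stmt10 (n : ℕ) (hn : 1 ≤ n)
    (A : Matrix (Fin n) (Fin n) ℝ)
    (r : Fin n → EuclideanSpace ℝ (Fin n))
    (hrow : ∀ i j, A i j = r i j)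
    (hinv : IsUnit A.det)
    (hne : ∀ i, r i ≠ 0)
    (xs : EuclideanSpace ℝ (Fin n)) (b : Fin n → ℝ)
    (hb : ∀ j, b j = ⟪r j, xs⟫)
    (α : Matrix (Fin n) (Fin n) ℝ)
    (hα01 : ∀ i j, α i j = 0 ∨ α i j = 1)
    (hsym : ∀ i j, α i j = α j i)
    (hself : ∀ i, α i i = 1)
    (d : Fin n → ℝ) (hd : ∀ i, d i = ∑ j, α i j)
    (x : ℕ → Fin n → EuclideanSpace ℝ (Fin n))
    (hinit : ∀ i, ⟪r i, x 0 i⟫ = b i)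
    (hupdate : ∀ t i, x (t + 1) i =
      x t i - (d i)⁻¹ •
        proj r i (d i • x t i -
          ∑ j ∈ Finset.univ.filter (fun j => α i j = 1), x t j)) :
    ∀ t i, x (t + 1) i - xs =
      (d i)⁻¹ •
        proj r i (∑ j ∈ Finset.univ.filter (fun j => α i j = 1),
          proj r j (x t j - xs)) :=
  stmt10_general n r hne xs b hb α hα01 hself d hd x hinit hupdate
end

section
/- If each agent's initial state satisfies ⟨A_i, x_i(0)⟩ = b_i and the states are updated by x_i(t+1) = x_i(t) − (1/d_i) P_i (d_i x_i(t) − ∑_{j : α_{ij}=1} x_j(t)), then the stacked error vector y(t) = col(y_1(t), …, y_n(t)) ∈ ℝ^{n²}, with y_i(t) = x_i(t) − x*, satisfies y(t) = M^t y(0) for all t ≥ 0, where M = P_diag ((D⁻¹ α) ⊗ I_n) P_diag, P_diag = diag(P_1, …, P_n) ∈ ℝ^{n² × n²}, D = diag(d_1, …, d_n), and ⊗ denotes the Kronecker product. -/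
open Kronecker

/-- The orthogonal projection matrix `P_i = I − A_i A_iᵀ/‖A_i‖²` onto `ker A_i`,
where `A_i` is the `i`-th row of `A` (viewed as a column vector). -/
noncomputable def projMat {n : ℕ} (A : Matrix (Fin n) (Fin n) ℝ) (i : Fin n) :
    Matrix (Fin n) (Fin n) ℝ :=
  1 - (∑ a, A i a ^ 2)⁻¹ • Matrix.vecMulVec (A i) (A i)

/-- The block-diagonal matrix `P_diag = diag(P_1, …, P_n) ∈ ℝ^{n² × n²}`,
indexed so that the pair `(i, a)` means coordinate `a` of agent `i`'s block. -/
noncomputable def Pdiag {n : ℕ} (A : Matrix (Fin n) (Fin n) ℝ) :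
    Matrix (Fin n × Fin n) (Fin n × Fin n) ℝ :=
  Matrix.of fun p q => if p.1 = q.1 then projMat A p.1 p.2 q.2 else 0

/-- The updating matrix `M = P_diag ((D⁻¹ α) ⊗ I_n) P_diag`. -/
noncomputable def Mmat {n : ℕ} (A α : Matrix (Fin n) (Fin n) ℝ) (d : Fin n → ℝ) :
    Matrix (Fin n × Fin n) (Fin n × Fin n) ℝ :=
  Pdiag A * (((Matrix.diagonal d)⁻¹ * α) ⊗ₖ (1 : Matrix (Fin n) (Fin n) ℝ)) * Pdiag A

open Matrix

/-!
Every `P_i` maps into `ker A_i`, so the constraint `⟨A_i, x_i(t)⟩ = b_i` is preserved by the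
update; hence each error `y_i(t)` lies in `ker A_i` and is fixed by `P_i`. Since
`d_i = ∑_j α_{ij}`, the update rewritten in terms of the errors loses its `x*`-terms and the
`P_i y_i` term cancels against `y_i`, leaving `y_i(t+1) = P_i ∑_j (α_{ij}/d_i) y_j(t)`, which is
the `i`-th block of `M y(t)` because `P_diag y(t) = y(t)`.
-/

section Projection

variable {n : ℕ} (A : Matrix (Fin n) (Fin n) ℝ) (i : Fin n)

theorem projMat_mulVec (v : Fin n → ℝ) :
    projMat A i *ᵥ v = v - ((A i ⬝ᵥ v) / (A i ⬝ᵥ A i)) • A i := by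
  ext a
  simp only [projMat, sub_mulVec, one_mulVec, smul_mulVec, vecMulVec_mulVec, Pi.sub_apply,
    Pi.smul_apply, smul_eq_mul, op_smul_eq_mul, dotProduct, sq]
  ring

theorem projMat_mulVec_of_dotProduct_eq_zero {v : Fin n → ℝ} (hv : A i ⬝ᵥ v = 0) :
    projMat A i *ᵥ v = v := by
  rw [projMat_mulVec, hv, zero_div, zero_smul, sub_zero]

theorem dotProduct_projMat_mulVec (v : Fin n → ℝ) : A i ⬝ᵥ (projMat A i *ᵥ v) = 0 := by
  by_cases h : A i = 0
  · rw [h, zero_dotProduct]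
  · rw [projMat_mulVec, dotProduct_sub, dotProduct_smul, smul_eq_mul,
      div_mul_cancel₀ _ (mt dotProduct_self_eq_zero.mp h), sub_self]

end Projection

theorem Pdiag_mulVec_apply {n : ℕ} (A : Matrix (Fin n) (Fin n) ℝ) (v : Fin n × Fin n → ℝ)
    (i a : Fin n) : (Pdiag A *ᵥ v) (i, a) = (projMat A i *ᵥ fun e => v (i, e)) a := by
  simp [Pdiag, mulVec, dotProduct, Fintype.sum_prod_type, ite_mul]

theorem kronecker_one_mulVec_apply {R l m : Type*} [CommSemiring R] [Fintype l] [Fintype m]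
    [DecidableEq m] (B : Matrix l l R) (v : l × m → R) (i : l) (a : m) :
    ((B ⊗ₖ (1 : Matrix m m R)) *ᵥ v) (i, a) = ∑ j, B i j * v (j, a) := by
  simp [mulVec, dotProduct, Fintype.sum_prod_type, one_apply, mul_ite]

theorem inv_diagonal_of_ne_zero {K m : Type*} [Field K] [Fintype m] [DecidableEq m]
    {d : m → K} (hd : ∀ i, d i ≠ 0) : (diagonal d)⁻¹ = diagonal d⁻¹ := by
  refine inv_eq_right_inv ?_
  rw [diagonal_mul_diagonal, ← diagonal_one]
  exact congrArg diagonal (funext fun i => mul_inv_cancel₀ (hd i))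

theorem Mmat_mulVec_apply {n : ℕ} (A α : Matrix (Fin n) (Fin n) ℝ) {d : Fin n → ℝ}
    (hd : ∀ i, d i ≠ 0) {y : Fin n × Fin n → ℝ} (hy : Pdiag A *ᵥ y = y) (i a : Fin n) :
    (Mmat A α d *ᵥ y) (i, a) = (projMat A i *ᵥ ∑ j, ((d i)⁻¹ * α i j) • fun e => y (j, e)) a := by
  rw [Mmat, ← mulVec_mulVec, ← mulVec_mulVec, hy, Pdiag_mulVec_apply, inv_diagonal_of_ne_zero hd]
  congr 2
  ext e
  simp [kronecker_one_mulVec_apply, diagonal_mul]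

theorem one_le_sum_of_zero_or_one {ι : Type*} [Fintype ι] {w : ι → ℝ}
    (hw : ∀ j, w j = 0 ∨ w j = 1) {i : ι} (hi : w i = 1) : 1 ≤ ∑ j, w j :=
  hi ▸ Finset.single_le_sum (fun j _ => by rcases hw j with h | h <;> simp [h])
    (Finset.mem_univ i)

theorem sum_filter_eq_one_eq_sum_smul {ι R M : Type*} [Fintype ι] [Semiring R] [Nontrivial R]
    [DecidableEq R] [AddCommMonoid M] [Module R M] {w : ι → R} (hw : ∀ j, w j = 0 ∨ w j = 1)
    (v : ι → M) :
    ∑ j ∈ Finset.univ.filter (fun j => w j = 1), v j = ∑ j, w j • v j := by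
  rw [Finset.sum_filter]
  refine Finset.sum_congr rfl fun j _ => ?_
  rcases hw j with h | h <;> simp [h]

theorem sub_inv_smul_mulVec_sub_eq {ι m K : Type*} [Fintype ι] [Fintype m] [Field K]
    (P : Matrix m m K) (x : ι → m → K) (c : m → K) (w : ι → K) {D : K} (hD : D = ∑ j, w j)
    (hD0 : D ≠ 0) {i : ι} (hfix : P *ᵥ (x i - c) = x i - c) :
    x i - D⁻¹ • P *ᵥ (D • x i - ∑ j, w j • x j) - c = P *ᵥ ∑ j, (D⁻¹ * w j) • (x j - c) := by
  have hcentre : D • x i - ∑ j, w j • x j = D • (x i - c) - ∑ j, w j • (x j - c) := by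
    simp only [smul_sub, Finset.sum_sub_distrib, ← Finset.sum_smul, ← hD, sub_sub_sub_cancel_right]
  rw [hcentre, mulVec_sub, mulVec_smul, hfix, smul_sub, inv_smul_smul₀ hD0]
  simp only [mul_smul, ← Finset.smul_sum, mulVec_smul]
  abel

theorem eq_pow_mulVec_of_succ {m R : Type*} [Fintype m] [DecidableEq m] [CommSemiring R]
    {M : Matrix m m R} {y : ℕ → m → R} (h : ∀ t, y (t + 1) = M *ᵥ y t) (t : ℕ) :
    y t = (M ^ t) *ᵥ y 0 := by
  induction t with
  | zero => rw [pow_zero, one_mulVec]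
  | succ t ih => rw [h, ih, mulVec_mulVec, pow_succ']

theorem stmt11_general (n : ℕ)
    (A : Matrix (Fin n) (Fin n) ℝ)
    (xs : Fin n → ℝ) (b : Fin n → ℝ)
    (hb : ∀ j, b j = ∑ a, A j a * xs a)
    (α : Matrix (Fin n) (Fin n) ℝ)
    (hα01 : ∀ i j, α i j = 0 ∨ α i j = 1)
    (hself : ∀ i, α i i = 1)
    (d : Fin n → ℝ) (hd : ∀ i, d i = ∑ j, α i j)
    (x : ℕ → Fin n → Fin n → ℝ)
    (hinit : ∀ i, ∑ a, A i a * x 0 i a = b i)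
    (hupdate : ∀ t i, x (t + 1) i =
      x t i - (d i)⁻¹ •
        (projMat A i).mulVec (d i • x t i -
          ∑ j ∈ Finset.univ.filter (fun j => α i j = 1), x t j)) :
    ∀ t, (fun p : Fin n × Fin n => x t p.1 p.2 - xs p.2) =
      ((Mmat A α d) ^ t).mulVec (fun p : Fin n × Fin n => x 0 p.1 p.2 - xs p.2) := by
  have hd0 : ∀ i, d i ≠ 0 := fun i =>
    (zero_lt_one.trans_le (hd i ▸ one_le_sum_of_zero_or_one (hα01 i) (hself i))).ne'
  have hcons : ∀ t i, A i ⬝ᵥ x t i = b i := by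
    intro t
    induction t with
    | zero => exact hinit
    | succ t ih =>
      intro i
      rw [hupdate, dotProduct_sub, dotProduct_smul, dotProduct_projMat_mulVec, smul_zero,
        sub_zero, ih]
  have hfix : ∀ t i, projMat A i *ᵥ (x t i - xs) = x t i - xs := fun t i =>
    projMat_mulVec_of_dotProduct_eq_zero A i (by rw [dotProduct_sub, hcons, hb]; exact sub_self _)
  refine eq_pow_mulVec_of_succ fun t => funext fun ⟨i, a⟩ => ?_
  have hPdiag : Pdiag A *ᵥ (fun p : Fin n × Fin n => x t p.1 p.2 - xs p.2) =
      fun p => x t p.1 p.2 - xs p.2 :=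
    funext fun ⟨j, e⟩ => (Pdiag_mulVec_apply A _ j e).trans (congrFun (hfix t j) e)
  rw [Mmat_mulVec_apply A α hd0 hPdiag, hupdate, sum_filter_eq_one_eq_sum_smul (hα01 i)]
  exact congrFun (sub_inv_smul_mulVec_sub_eq _ (x t) xs (α i) (hd i) (hd0 i) (hfix t i)) a

/-- If each agent's initial state satisfies `⟨A_i, x_i(0)⟩ = b_i` and the
states are updated by
`x_i(t+1) = x_i(t) − (1/d_i) P_i (d_i x_i(t) − ∑_{j : α_{ij}=1} x_j(t))`, then the
stacked error vector `y(t) = col(y_1(t),…,y_n(t)) ∈ ℝ^{n²}`, `y_i(t) = x_i(t) − x*`,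
satisfies `y(t) = M^t y(0)` for all `t ≥ 0`, where
`M = P_diag ((D⁻¹ α) ⊗ I_n) P_diag`, `P_diag = diag(P_1,…,P_n)`, `D = diag(d)`. -/
theorem stmt11 (n : ℕ) (hn : 1 ≤ n)
    (A : Matrix (Fin n) (Fin n) ℝ)
    (hinv : IsUnit A.det)
    (hne : ∀ i, A i ≠ 0)
    (xs : Fin n → ℝ) (b : Fin n → ℝ)
    (hb : ∀ j, b j = ∑ a, A j a * xs a)
    (α : Matrix (Fin n) (Fin n) ℝ)
    (hα01 : ∀ i j, α i j = 0 ∨ α i j = 1)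
    (hsym : ∀ i j, α i j = α j i)
    (hself : ∀ i, α i i = 1)
    (d : Fin n → ℝ) (hd : ∀ i, d i = ∑ j, α i j)
    (x : ℕ → Fin n → Fin n → ℝ)
    (hinit : ∀ i, ∑ a, A i a * x 0 i a = b i)
    (hupdate : ∀ t i, x (t + 1) i =
      x t i - (d i)⁻¹ •
        (projMat A i).mulVec (d i • x t i -
          ∑ j ∈ Finset.univ.filter (fun j => α i j = 1), x t j)) :
    ∀ t, (fun p : Fin n × Fin n => x t p.1 p.2 - xs p.2) =
      ((Mmat A α d) ^ t).mulVec (fun p : Fin n × Fin n => x 0 p.1 p.2 - xs p.2) :=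
  stmt11_general n A xs b hb α hα01 hself d hd x hinit hupdate
end

section
/- Consider the distributed algorithm on the complete graph with self-loops on n vertices, so that d_i = n and every agent is a neighbor of every agent: x_i(t+1) = x_i(t) − (1/n) P_i (n x_i(t) − ∑_{j=1}^n x_j(t)). If each initial state satisfies ⟨A_i, x_i(0)⟩ = b_i, then every agent's state converges to the true solution: lim_{t→∞} x_i(t) = x* for every i ∈ {1,…,n}. -/
open scoped RealInnerProductSpace

/-!
Write `e_i(t) = x_i(t) - x*`. Each `P_i` maps into `A_iᗮ`, so `⟨A_i, x_i(t)⟩ = b_i` for all `t`,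
i.e. `e_i(t) ∈ A_iᗮ` and `P_i e_i(t) = e_i(t)`. The update then collapses to
`e_i(t+1) = (1/n) P_i S(t)` with `S(t) = ∑_j e_j(t)`, hence `S(t+1) = M S(t)` for the averaged
projection `M = (1/n) ∑_i P_i`. Every `P_i` is a contraction, and strictly so on vectors not in
`A_iᗮ`; since the rows span `ℝ^n`, `‖M y‖ < ‖y‖` for `y ≠ 0`, and compactness of the unit sphere
gives `‖M‖ < 1`. So `S(t) → 0`, and with it every `e_i(t+1)`.
-/

open Filter Topology Submodule

theorem ContinuousLinearMap.norm_lt_one_of_norm_apply_lt {E F : Type*}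
    [NormedAddCommGroup E] [NormedSpace ℝ E] [ProperSpace E]
    [NormedAddCommGroup F] [NormedSpace ℝ F] (T : E →L[ℝ] F)
    (hT : ∀ y, y ≠ 0 → ‖T y‖ < ‖y‖) : ‖T‖ < 1 := by
  rcases (Metric.sphere (0 : E) 1).eq_empty_or_nonempty with hempty | hsphere
  · refine (T.opNorm_le_of_unit_norm le_rfl fun y hy => ?_).trans_lt one_pos
    exact absurd (hempty ▸ mem_sphere_zero_iff_norm.2 hy : y ∈ (∅ : Set E)) (Set.notMem_empty y)
  obtain ⟨y₀, hy₀, hmax⟩ := (isCompact_sphere (0 : E) 1).exists_isMaxOn hsphere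
    (continuous_norm.comp T.continuous).continuousOn
  have hy₀ : ‖y₀‖ = 1 := mem_sphere_zero_iff_norm.1 hy₀
  refine (T.opNorm_le_of_unit_norm (norm_nonneg (T y₀)) fun y hy => ?_).trans_lt ?_
  · exact hmax (mem_sphere_zero_iff_norm.2 hy)
  · simpa [hy₀] using hT y₀ (by rintro rfl; simp at hy₀)

theorem norm_inv_card_smul_sum_lt {E ι : Type*} [SeminormedAddCommGroup E] [NormedSpace ℝ E]
    [Fintype ι] {v : ι → E} {c : ℝ} (hle : ∀ i, ‖v i‖ ≤ c) (hlt : ∃ i, ‖v i‖ < c) :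
    ‖(Fintype.card ι : ℝ)⁻¹ • ∑ i, v i‖ < c := by
  obtain ⟨i₀, hi₀⟩ := hlt
  have hcard : (0 : ℝ) < Fintype.card ι := Nat.cast_pos.2 (Fintype.card_pos_iff.2 ⟨i₀⟩)
  rw [norm_smul, norm_inv, Real.norm_natCast, inv_mul_lt_iff₀ hcard]
  calc ‖∑ i, v i‖ ≤ ∑ i, ‖v i‖ := norm_sum_le _ _
    _ < ∑ _i : ι, c := Finset.sum_lt_sum (fun i _ => hle i) ⟨i₀, Finset.mem_univ _, hi₀⟩
    _ = Fintype.card ι * c := by simp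

section

variable {E : Type*} [NormedAddCommGroup E] [InnerProductSpace ℝ E]

theorem norm_starProjection_orthogonal_singleton_lt {a y : E} (h : ⟪a, y⟫ ≠ 0) :
    ‖(ℝ ∙ a)ᗮ.starProjection y‖ < ‖y‖ := by
  refine (norm_starProjection_apply_le _ y).lt_of_ne fun heq => h ?_
  exact mem_orthogonal_singleton_iff_inner_right.1 (((ℝ ∙ a)ᗮ.mem_iff_norm_starProjection y).2 heq)

variable {ι : Type*} [Fintype ι]

noncomputable def averagedProjection (a : ι → E) : E →L[ℝ] E :=
  (Fintype.card ι : ℝ)⁻¹ • ∑ i, (ℝ ∙ a i)ᗮ.starProjection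

theorem norm_averagedProjection_lt_one [ProperSpace E] {a : ι → E}
    (hsep : ∀ y, (∀ i, ⟪a i, y⟫ = 0) → y = 0) : ‖averagedProjection a‖ < 1 := by
  refine (averagedProjection a).norm_lt_one_of_norm_apply_lt fun y hy => ?_
  obtain ⟨i₀, hi₀⟩ : ∃ i, ⟪a i, y⟫ ≠ 0 := by
    by_contra! h
    exact hy (hsep y h)
  have := norm_inv_card_smul_sum_lt
    (fun i => norm_starProjection_apply_le (ℝ ∙ a i)ᗮ y)
    ⟨i₀, norm_starProjection_orthogonal_singleton_lt hi₀⟩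
  simpa only [averagedProjection, smul_apply, sum_apply] using this

def IsProjectedConsensusIteration (a : ι → E) (x : ℕ → ι → E) : Prop :=
  ∀ t i, x (t + 1) i = x t i - (Fintype.card ι : ℝ)⁻¹ •
    (ℝ ∙ a i)ᗮ.starProjection ((Fintype.card ι : ℝ) • x t i - ∑ j, x t j)

variable {a : ι → E} {xs : E} {x : ℕ → ι → E}

theorem IsProjectedConsensusIteration.inner_eq_inner_zero
    (hx : IsProjectedConsensusIteration a x) (t : ℕ) (i : ι) : ⟪a i, x t i⟫ = ⟪a i, x 0 i⟫ := by
  induction t with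
  | zero => rfl
  | succ t ih =>
    have hperp := mem_orthogonal_singleton_iff_inner_right.1 ((ℝ ∙ a i)ᗮ.starProjection_apply_mem
      ((Fintype.card ι : ℝ) • x t i - ∑ j, x t j))
    rw [hx, inner_sub_right, real_inner_smul_right, hperp, mul_zero, sub_zero, ih]

theorem IsProjectedConsensusIteration.succ_sub_eq (hx : IsProjectedConsensusIteration a x)
    (hinit : ∀ i, ⟪a i, x 0 i⟫ = ⟪a i, xs⟫) (t : ℕ) (i : ι) :
    x (t + 1) i - xs = (Fintype.card ι : ℝ)⁻¹ •
      (ℝ ∙ a i)ᗮ.starProjection (∑ j, (x t j - xs)) := by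
  have hcard : (Fintype.card ι : ℝ) ≠ 0 := Nat.cast_ne_zero.2 (Fintype.card_pos_iff.2 ⟨i⟩).ne'
  have hfixed : (ℝ ∙ a i)ᗮ.starProjection (x t i - xs) = x t i - xs := by
    rw [starProjection_eq_self_iff, mem_orthogonal_singleton_iff_inner_right, inner_sub_right,
      hx.inner_eq_inner_zero, hinit, sub_self]
  have hsplit : (Fintype.card ι : ℝ) • x t i - ∑ j, x t j
      = (Fintype.card ι : ℝ) • (x t i - xs) - ∑ j, (x t j - xs) := by
    simp only [Finset.sum_sub_distrib, Finset.sum_const, Finset.card_univ, smul_sub,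
      Nat.cast_smul_eq_nsmul]
    abel
  rw [hx, hsplit, map_sub, map_smul, hfixed, smul_sub, smul_smul, inv_mul_cancel₀ hcard,
    one_smul]
  abel

theorem IsProjectedConsensusIteration.sum_sub_eq (hx : IsProjectedConsensusIteration a x)
    (hinit : ∀ i, ⟪a i, x 0 i⟫ = ⟪a i, xs⟫) (t : ℕ) :
    ∑ i, (x t i - xs) = (averagedProjection a ^ t) (∑ i, (x 0 i - xs)) := by
  induction t with
  | zero => simp
  | succ t ih =>
    calc ∑ i, (x (t + 1) i - xs) = averagedProjection a (∑ i, (x t i - xs)) := by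
          simp only [hx.succ_sub_eq hinit, ← Finset.smul_sum, averagedProjection, smul_apply,
            sum_apply]
      _ = _ := by rw [ih, pow_succ']; rfl

theorem IsProjectedConsensusIteration.tendsto [ProperSpace E]
    (hx : IsProjectedConsensusIteration a x) (hsep : ∀ y, (∀ i, ⟪a i, y⟫ = 0) → y = 0)
    (hinit : ∀ i, ⟪a i, x 0 i⟫ = ⟪a i, xs⟫) (i : ι) :
    Tendsto (fun t => x t i) atTop (𝓝 xs) := by
  have hsum : Tendsto (fun t => ∑ j, (x t j - xs)) atTop (𝓝 0) := by
    have hpow := ((ContinuousLinearMap.apply ℝ E (∑ j, (x 0 j - xs))).continuous.tendsto 0).comp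
      (tendsto_pow_atTop_nhds_zero_of_norm_lt_one (norm_averagedProjection_lt_one hsep))
    simp only [Function.comp_def, ContinuousLinearMap.apply_apply, zero_apply] at hpow
    exact hpow.congr fun t => (hx.sum_sub_eq hinit t).symm
  have herr : Tendsto (fun t => x (t + 1) i - xs) atTop (𝓝 0) := by
    simp_rw [hx.succ_sub_eq hinit]
    simpa using (((ℝ ∙ a i)ᗮ.starProjection.continuous.tendsto 0).comp hsum).const_smul
      (Fintype.card ι : ℝ)⁻¹
  exact (tendsto_add_atTop_iff_nat 1).1 (tendsto_sub_nhds_zero_iff.1 herr)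

end

theorem proj_apply_eq_starProjection {n : ℕ} (r : Fin n → EuclideanSpace ℝ (Fin n)) (i : Fin n)
    (x : EuclideanSpace ℝ (Fin n)) : proj r i x = (ℝ ∙ r i)ᗮ.starProjection x := by
  rw [starProjection_orthogonal_val, starProjection_singleton, proj]
  rfl

theorem Matrix.eq_zero_of_forall_inner_row_eq_zero {n : ℕ} {A : Matrix (Fin n) (Fin n) ℝ}
    {r : Fin n → EuclideanSpace ℝ (Fin n)} (hrow : ∀ i j, A i j = r i j) (hinv : IsUnit A.det)
    (y : EuclideanSpace ℝ (Fin n)) (hy : ∀ i, ⟪r i, y⟫ = 0) : y = 0 := by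
  have hAy : A.mulVec y.ofLp = 0 := funext fun i => by
    simpa [Matrix.mulVec, dotProduct, PiLp.inner_apply, hrow, mul_comm] using hy i
  have hinj := Matrix.mulVec_injective_iff_isUnit.2 ((A.isUnit_iff_isUnit_det).2 hinv)
  exact WithLp.ofLp_injective 2 (hinj (hAy.trans (A.mulVec_zero).symm))

theorem stmt16_general (n : ℕ)
    (A : Matrix (Fin n) (Fin n) ℝ)
    (r : Fin n → EuclideanSpace ℝ (Fin n))
    (hrow : ∀ i j, A i j = r i j)
    (hinv : IsUnit A.det)
    (xs : EuclideanSpace ℝ (Fin n)) (b : Fin n → ℝ)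
    (hb : ∀ j, b j = ⟪r j, xs⟫)
    (x : ℕ → Fin n → EuclideanSpace ℝ (Fin n))
    (hinit : ∀ i, ⟪r i, x 0 i⟫ = b i)
    (hupdate : ∀ t i, x (t + 1) i =
      x t i - (n : ℝ)⁻¹ • proj r i ((n : ℝ) • x t i - ∑ j, x t j)) :
    ∀ i, Filter.Tendsto (fun t => x t i) Filter.atTop (nhds xs) := by
  have hx : IsProjectedConsensusIteration r x := by
    simpa only [IsProjectedConsensusIteration, Fintype.card_fin, proj_apply_eq_starProjection]
      using hupdate
  exact hx.tendsto (Matrix.eq_zero_of_forall_inner_row_eq_zero hrow hinv)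
    fun i => (hinit i).trans (hb i)

/-- Consider the distributed algorithm on the complete graph with
self-loops on `n` vertices (so `d_i = n` and every agent is a neighbor of every agent):
`x_i(t+1) = x_i(t) − (1/n) P_i (n x_i(t) − ∑_{j=1}^n x_j(t))`. If each initial state
satisfies `⟨A_i, x_i(0)⟩ = b_i`, then every agent's state converges to the true
solution: `lim_{t→∞} x_i(t) = x*` for every `i`. -/
theorem stmt16 (n : ℕ) (hn : 1 ≤ n)
    (A : Matrix (Fin n) (Fin n) ℝ)
    (r : Fin n → EuclideanSpace ℝ (Fin n))
    (hrow : ∀ i j, A i j = r i j)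
    (hinv : IsUnit A.det)
    (hne : ∀ i, r i ≠ 0)
    (xs : EuclideanSpace ℝ (Fin n)) (b : Fin n → ℝ)
    (hb : ∀ j, b j = ⟪r j, xs⟫)
    (x : ℕ → Fin n → EuclideanSpace ℝ (Fin n))
    (hinit : ∀ i, ⟪r i, x 0 i⟫ = b i)
    (hupdate : ∀ t i, x (t + 1) i =
      x t i - (n : ℝ)⁻¹ • proj r i ((n : ℝ) • x t i - ∑ j, x t j)) :
    ∀ i, Filter.Tendsto (fun t => x t i) Filter.atTop (nhds xs) :=
  stmt16_general n A r hrow hinv xs b hb x hinit hupdate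
end
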